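/- arXiv:2108.08947 — 6 statements merged into one kernel-verified Lean document; each statement's English description precedes it below -/
import Mathlib

section
/- (Ljunggren's identity) For natural numbers n, α and real numbers x, y: Σ_{k=0}^{n} C(α+k, k) C(n, k) (x−y)^{n−k} y^k = Σ_{k=0}^{n} C(α, k) C(n, k) x^{n−k} y^k. -/
/-!
With `z = x - y`, expand `(z + y) ^ (n - k)` on the right by the binomial theorem. The trinomial
revision `C(n, k) C(n - k, i) = C(n, i) C(n - i, k)` lets the double sum be reindexed by the power
`i` of `z`, and the inner sum `∑ₖ C(α, k) C(n - i, k)` collapses to `C(α + n - i, n - i)` by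
Chu–Vandermonde; reflecting `i ↦ n - i` gives the left side.
-/

open Finset

namespace Nat

theorem choose_mul_choose_sub_comm (n k i : ℕ) :
    n.choose k * (n - k).choose i = n.choose i * (n - i).choose k := by
  have hk := choose_mul (n := n) (Nat.le_add_right k i)
  have hi := choose_mul (n := n) (Nat.le_add_left i k)
  rw [Nat.add_sub_cancel_left] at hk
  rw [Nat.add_sub_cancel] at hi
  rw [← hk, ← hi, choose_symm_add]

theorem sum_range_choose_mul_choose (a m : ℕ) :
    ∑ k ∈ range (m + 1), a.choose k * m.choose k = (a + m).choose m := by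
  rw [add_choose_eq, Finset.Nat.sum_antidiagonal_eq_sum_range_succ_mk]
  refine sum_congr rfl fun k hk => ?_
  rw [choose_symm (mem_range_succ_iff.mp hk)]

end Nat

section CommSemiring

variable {R : Type*} [CommSemiring R]

theorem sum_choose_mul_choose_mul_add_pow_mul_pow (α n : ℕ) (z y : R) :
    ∑ k ∈ range (n + 1), (α.choose k : R) * n.choose k * (z + y) ^ (n - k) * y ^ k =
      ∑ i ∈ range (n + 1), ((α + (n - i)).choose (n - i) : R) * n.choose i * z ^ i * y ^ (n - i) :=
  calc _ = ∑ k ∈ range (n + 1), ∑ i ∈ range (n - k + 1),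
          (α.choose k : R) * (n.choose i * (n - i).choose k : ℕ) * z ^ i * y ^ (n - i) := by
        refine sum_congr rfl fun k hk => ?_
        rw [add_pow, mul_sum, sum_mul]
        refine sum_congr rfl fun i hi => ?_
        rw [← Nat.choose_mul_choose_sub_comm, show n - i = (n - k - i) + k by grind, pow_add]
        push_cast
        ring
    _ = ∑ i ∈ range (n + 1), ∑ k ∈ range (n - i + 1),
          (α.choose k : R) * (n.choose i * (n - i).choose k : ℕ) * z ^ i * y ^ (n - i) :=
        sum_comm' fun k i => by simp only [mem_range]; omega
    _ = _ := by
        refine sum_congr rfl fun i _ => ?_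
        rw [← Nat.sum_range_choose_mul_choose, Nat.cast_sum, sum_mul, sum_mul, sum_mul]
        refine sum_congr rfl fun k _ => ?_
        push_cast
        ring

theorem sum_add_choose_mul_choose_mul_pow_mul_pow (α n : ℕ) (z y : R) :
    ∑ k ∈ range (n + 1), ((α + k).choose k : R) * n.choose k * z ^ (n - k) * y ^ k =
      ∑ k ∈ range (n + 1), (α.choose k : R) * n.choose k * (z + y) ^ (n - k) * y ^ k := by
  rw [sum_choose_mul_choose_mul_add_pow_mul_pow, ← sum_range_reflect]
  refine sum_congr rfl fun k hk => ?_
  have hkn : k ≤ n := mem_range_succ_iff.mp hk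
  rw [add_tsub_cancel_right, Nat.sub_sub_self hkn, Nat.choose_symm hkn]

end CommSemiring

theorem ljunggren_identity (n α : ℕ) (x y : ℝ) :
    ∑ k ∈ range (n + 1),
        ((α + k).choose k : ℝ) * (n.choose k : ℝ) * (x - y) ^ (n - k) * y ^ k =
      ∑ k ∈ range (n + 1), (α.choose k : ℝ) * (n.choose k : ℝ) * x ^ (n - k) * y ^ k := by
  rw [sum_add_choose_mul_choose_mul_pow_mul_pow, sub_add_cancel]
end

section
/- (Special case of Ljunggren's identity) For natural numbers n, α and a real number y: Σ_{k=0}^{n} C(α+k, k) C(n, k) (1−y)^{n−k} y^k = Σ_{k=0}^{n} C(α, k) C(n, k) y^k. -/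
/-!
Vandermonde gives `C(α+k, k) = ∑ᵢ C(α, i) C(k, i)`. After exchanging the sums, the coefficient of
`C(α, i)` is `∑ₖ C(n, k) C(k, i) aⁿ⁻ᵏ bᵏ = C(n, i) (a + b)ⁿ⁻ⁱ bⁱ`, by
`C(n, k) C(k, i) = C(n, i) C(n - i, k - i)` and the binomial theorem. Take `a = 1 - y`, `b = y`.
-/

open Finset

theorem Nat.add_choose_eq_sum_choose_mul_choose (α k : ℕ) :
    (α + k).choose k = ∑ i ∈ range (k + 1), α.choose i * k.choose i := by
  rw [Nat.add_choose_eq, Nat.sum_antidiagonal_eq_sum_range_succ_mk]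
  refine sum_congr rfl fun i hi => ?_
  rw [Nat.choose_symm (mem_range_succ_iff.mp hi)]

section CommSemiring

variable {R : Type*} [CommSemiring R]

theorem sum_Ico_choose_mul_choose_mul_pow {i n : ℕ} (hi : i ≤ n) (a b : R) :
    ∑ k ∈ Ico i (n + 1), (n.choose k * k.choose i : R) * a ^ (n - k) * b ^ k =
      n.choose i * (a + b) ^ (n - i) * b ^ i := by
  obtain ⟨m, rfl⟩ := Nat.exists_eq_add_of_le hi
  have hterm : ∀ j ∈ range (m + 1),
      ((i + m).choose (i + j) * (i + j).choose i : R) * a ^ (i + m - (i + j)) * b ^ (i + j) =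
        (i + m).choose i * b ^ i * (b ^ j * a ^ (m - j) * m.choose j) := by
    intro j _
    have hchoose : (i + m).choose (i + j) * (i + j).choose i = (i + m).choose i * m.choose j := by
      simp [Nat.choose_mul (Nat.le_add_right i j)]
    rw [← Nat.cast_mul, hchoose, Nat.add_sub_add_left, pow_add]
    push_cast
    ring
  rw [sum_Ico_eq_sum_range, show i + m + 1 - i = m + 1 by omega, sum_congr rfl hterm,
    ← mul_sum, ← add_pow, add_comm b, Nat.add_sub_cancel_left]
  ring

theorem sum_add_choose_mul_choose_mul_pow (α n : ℕ) (a b : R) :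
    ∑ k ∈ range (n + 1), ((α + k).choose k * n.choose k : R) * a ^ (n - k) * b ^ k =
      ∑ i ∈ range (n + 1), (α.choose i * n.choose i : R) * (a + b) ^ (n - i) * b ^ i := by
  simp_rw [Nat.add_choose_eq_sum_choose_mul_choose, Nat.cast_sum, Nat.cast_mul, sum_mul]
  simp only [range_eq_Ico]
  rw [← sum_Ico_Ico_comm]
  refine sum_congr rfl fun i hi => ?_
  rw [mul_assoc, mul_assoc, ← mul_assoc (n.choose i : R),
    ← sum_Ico_choose_mul_choose_mul_pow (Nat.lt_succ_iff.mp (mem_Ico.mp hi).2), mul_sum]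
  exact sum_congr rfl fun k _ => by ring

end CommSemiring

theorem ljunggren_identity_one (n α : ℕ) (y : ℝ) :
    ∑ k ∈ range (n + 1),
        ((α + k).choose k : ℝ) * (n.choose k : ℝ) * (1 - y) ^ (n - k) * y ^ k =
      ∑ k ∈ range (n + 1), (α.choose k : ℝ) * (n.choose k : ℝ) * y ^ k := by
  simpa using sum_add_choose_mul_choose_mul_pow α n (1 - y) y
end

section
/- For a real number α (with α, α+1, … avoiding nonpositive values so all factors are nonzero) and natural numbers r ≥ l: Σ_{j=l}^{r} C(r, j) (α−1)_{r−j} (j!)²/(j−l)! = (r! · l!/(r−l)!) · (α+l)_{r−l}. -/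
/-!
Put j = l + p. Since (l + p)! = l! · (l + 1)_p, the summand equals
r! l! / (r - l)! · C(r - l, p) (l + 1)_p (α - 1)_{r - l - p}, so the sum is the Chu–Vandermonde
expansion of (α + l)_{r - l} = ((l + 1) + (α - 1))_{r - l}.
-/

open Polynomial Finset

/-- Ascending factorial (Pochhammer symbol) `(a)_n` for a real number `a`. -/
noncomputable def asc (a : ℝ) (n : ℕ) : ℝ := (ascPochhammer ℝ n).eval a

open Nat

theorem ascPochhammer_eval_add {S : Type*} [CommSemiring S] (a b : S) (k : ℕ) :
    (ascPochhammer S k).eval (a + b) = ∑ ij ∈ antidiagonal k,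
      (k.choose ij.1 : S) * ((ascPochhammer S ij.1).eval a * (ascPochhammer S ij.2).eval b) := by
  induction k with
  | zero => simp
  | succ k ih =>
    rw [ascPochhammer_succ_eval, ih, sum_mul,
      sum_antidiagonal_choose_succ_mul (fun i j => (ascPochhammer S i).eval a *
        (ascPochhammer S j).eval b) k, ← sum_add_distrib]
    refine sum_congr rfl fun ij hij => ?_
    have hk : ij.1 + ij.2 = k := mem_antidiagonal.mp hij
    rw [Nat.choose_symm_of_eq_add hk.symm, ascPochhammer_succ_eval, ascPochhammer_succ_eval, ← hk]
    push_cast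
    ring

theorem asc_succ_natCast (l p : ℕ) : asc (l + 1) p = (l + p)! / l ! := by
  rw [eq_div_iff (by positivity), mul_comm, asc]
  exact_mod_cast factorial_mul_ascPochhammer ℝ l p

theorem choose_mul_factorial_sq_div {l j r : ℕ} (hlj : l ≤ j) (hjr : j ≤ r) :
    (r.choose j : ℝ) * ((j ! : ℝ) ^ 2 / (j - l)!) =
      r ! * l ! / (r - l)! * ((r - l).choose (j - l) * (j ! / l !)) := by
  have hsub : r - l - (j - l) = r - j := by omega
  rw [Nat.cast_choose ℝ hjr, Nat.cast_choose ℝ (Nat.sub_le_sub_right hjr l), hsub]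
  field_simp

theorem sum_choose_asc_factorial_general (α : ℝ) (r l : ℕ) (hlr : l ≤ r) :
    ∑ j ∈ Finset.Icc l r,
        (r.choose j : ℝ) * asc (α - 1) (r - j) * ((j.factorial : ℝ) ^ 2 / ((j - l).factorial : ℝ)) =
      (r.factorial : ℝ) * (l.factorial : ℝ) / ((r - l).factorial : ℝ) * asc (α + l) (r - l) := by
  have hshift : α + l = (l + 1 : ℝ) + (α - 1) := by ring
  rw [← Ico_add_one_right_eq_Icc, sum_Ico_eq_sum_range, Nat.sub_add_comm hlr, hshift, asc,
    ascPochhammer_eval_add, Nat.sum_antidiagonal_eq_sum_range_succ_mk, mul_sum]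
  refine sum_congr rfl fun p hp => ?_
  have hpr : l + p ≤ r := by rw [mem_range] at hp; omega
  have hsub : r - l - p = r - (l + p) := by omega
  rw [← asc, ← asc, asc_succ_natCast, hsub, mul_right_comm,
    choose_mul_factorial_sq_div (Nat.le_add_right l p) hpr, Nat.add_sub_cancel_left]
  ring

theorem sum_choose_asc_factorial (α : ℝ) (hα : 0 < α) (r l : ℕ) (hlr : l ≤ r) :
    ∑ j ∈ Finset.Icc l r,
        (r.choose j : ℝ) * asc (α - 1) (r - j) * ((j.factorial : ℝ) ^ 2 / ((j - l).factorial : ℝ)) =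
      (r.factorial : ℝ) * (l.factorial : ℝ) / ((r - l).factorial : ℝ) * asc (α + l) (r - l) :=
  sum_choose_asc_factorial_general α r l hlr
end

section
/- (Kummer recurrence 13.4.5) For real a, b, x with b, b+1 nonzero and avoiding nonpositive-integer issues in the series: b(a+x)·₁F₁(a;b;x) + x(a−b)·₁F₁(a;b+1;x) − a·b·₁F₁(a+1;b;x) = 0. -/
open Polynomial

/-- Kummer confluent hypergeometric function `₁F₁(a; b; x)`. -/
noncomputable def F11 (a b x : ℝ) : ℝ := ∑' i : ℕ, asc a i / asc b i * x ^ i / (i.factorial : ℝ)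

/-!
Write `tₙ(a, b)` for the `n`-th term of the series of `₁F₁(a; b; x)`. The term ratio
`tₙ₊₁(a, b) / tₙ(a, b) = (a + n) x / ((b + n)(n + 1))` tends to `0`, so all series converge, and the
contiguous relations `a tₙ(a + 1, b) = (a + n) tₙ(a, b)` and `(b + n) tₙ(a, b + 1) = b tₙ(a, b)`
show that the `n`-th term of the combination is `gₙ - gₙ₊₁` with `gₙ = a b (tₙ(a, b) - tₙ(a + 1, b))`.
The series therefore telescopes to `g₀ = 0`.
-/

open Filter Topology

theorem summable_of_succ_eq_smul {𝕜 E : Type*} [NormedField 𝕜] [NormedAddCommGroup E]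
    [NormedSpace 𝕜 E] [CompleteSpace E] {f : ℕ → E} {ρ : ℕ → 𝕜}
    (hf : ∀ n, f (n + 1) = ρ n • f n) (hρ : Tendsto ρ atTop (𝓝 0)) : Summable f := by
  refine summable_of_ratio_norm_eventually_le (r := 1 / 2) (by norm_num) ?_
  have hsmall : ∀ᶠ n in atTop, ‖ρ n‖ ≤ 1 / 2 :=
    hρ.norm.eventually (ge_mem_nhds (by norm_num : ‖(0 : 𝕜)‖ < 1 / 2))
  filter_upwards [hsmall] with n hn
  calc ‖f (n + 1)‖ ≤ ‖ρ n‖ * ‖f n‖ := hf n ▸ norm_smul_le _ _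
    _ ≤ 1 / 2 * ‖f n‖ := by gcongr

theorem Summable.hasSum_sub_succ {G : Type*} [AddCommGroup G] [TopologicalSpace G]
    [IsTopologicalAddGroup G] {g : ℕ → G} (hg : Summable g) :
    HasSum (fun n ↦ g n - g (n + 1)) (g 0) := by
  simpa using hg.hasSum.sub ((hasSum_nat_add_iff' 1).2 hg.hasSum)

theorem asc_zero (a : ℝ) : asc a 0 = 1 := by simp [asc]

theorem asc_succ (a : ℝ) (n : ℕ) : asc a (n + 1) = asc a n * (a + n) := by
  simp [asc, ascPochhammer_succ_right]

theorem asc_succ_eq_mul_asc_add_one (a : ℝ) (n : ℕ) : asc a (n + 1) = a * asc (a + 1) n := by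
  simp [asc, ascPochhammer_succ_left, add_comm]

theorem asc_ne_zero {b : ℝ} (hb : ∀ n : ℕ, b ≠ -(n : ℝ)) (n : ℕ) : asc b n ≠ 0 := by
  induction n with
  | zero => simp [asc_zero]
  | succ k ih =>
    rw [asc_succ]
    exact mul_ne_zero ih fun h ↦ hb k (by linarith)

noncomputable def kummerTerm (a b x : ℝ) (i : ℕ) : ℝ := asc a i / asc b i * x ^ i / i.factorial

theorem kummerTerm_zero (a b x : ℝ) : kummerTerm a b x 0 = 1 := by
  simp [kummerTerm, asc_zero]

-- When `(b)ₙ₊₁ = 0` both sides vanish, because `y / 0 = 0` in Lean.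
theorem kummerTerm_succ (a b x : ℝ) (n : ℕ) :
    kummerTerm a b x (n + 1) = (a + n) * x / ((b + n) * (n + 1)) * kummerTerm a b x n := by
  simp only [kummerTerm, asc_succ, pow_succ, Nat.factorial_succ]
  push_cast
  simp only [div_eq_mul_inv, mul_inv]
  ring

theorem summable_kummerTerm (a b x : ℝ) : Summable (kummerTerm a b x) := by
  refine summable_of_succ_eq_smul (ρ := fun n ↦ (a + n) * x / ((b + n) * (n + 1)))
    (kummerTerm_succ a b x) ?_
  have hratio : Tendsto (fun n : ℕ ↦ (a + 1 * n) / (b + 1 * n)) atTop (𝓝 (1 / 1)) :=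
    tendsto_add_mul_div_add_mul_atTop_nhds a b 1 one_ne_zero
  have hx : Tendsto (fun n : ℕ ↦ x * (1 / ((n : ℝ) + 1))) atTop (𝓝 (x * 0)) :=
    tendsto_one_div_add_atTop_nhds_zero_nat.const_mul x
  convert hratio.mul hx using 2 with n
  · simp only [one_mul]
    rw [mul_div_mul_comm]
    ring
  · simp

theorem mul_kummerTerm_add_one_left (a b x : ℝ) (n : ℕ) :
    a * kummerTerm (a + 1) b x n = (a + n) * kummerTerm a b x n := by
  have h : a * asc (a + 1) n = (a + n) * asc a n := by
    rw [← asc_succ_eq_mul_asc_add_one, asc_succ, mul_comm]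
  simp only [kummerTerm]
  linear_combination (x ^ n / asc b n / n.factorial) * h

theorem mul_kummerTerm_add_one_right (a : ℝ) {b : ℝ} (x : ℝ) {n : ℕ} (hb : asc b (n + 1) ≠ 0) :
    (b + n) * kummerTerm a (b + 1) x n = b * kummerTerm a b x n := by
  have h : asc b (n + 1) = b * asc (b + 1) n := asc_succ_eq_mul_asc_add_one b n
  have h' : asc b (n + 1) = asc b n * (b + n) := asc_succ b n
  obtain ⟨-, hS⟩ := mul_ne_zero_iff.1 (h ▸ hb)
  obtain ⟨hQ, -⟩ := mul_ne_zero_iff.1 (h' ▸ hb)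
  simp only [kummerTerm]
  field_simp
  linear_combination (asc a n * x ^ n) * (h - h')

theorem kummerTerm_contiguous (a : ℝ) {b : ℝ} (x : ℝ) (hb : ∀ n : ℕ, b ≠ -(n : ℝ)) (n : ℕ) :
    a * b * (kummerTerm a b x (n + 1) - kummerTerm (a + 1) b x (n + 1)) =
      -(x * (b * kummerTerm a b x n + (a - b) * kummerTerm a (b + 1) x n)) := by
  have hbn : b + n ≠ 0 := fun h ↦ hb n (by linarith)
  have hleft := mul_kummerTerm_add_one_left a b x (n + 1)
  have hright := mul_kummerTerm_add_one_right a x (asc_ne_zero hb (n + 1))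
  have hsucc := kummerTerm_succ a b x n
  push_cast at hleft
  refine mul_left_cancel₀ hbn ?_
  rw [hsucc] at hleft ⊢
  field_simp at hleft ⊢
  linear_combination (-b) * hleft + (n + 1) * x * (a - b) * hright

theorem kummer_recurrence_13_4_5_general (a b x : ℝ)
    (hb : ∀ n : ℕ, b ≠ -(n : ℝ)) :
    b * (a + x) * F11 a b x + x * (a - b) * F11 a (b + 1) x - a * b * F11 (a + 1) b x = 0 := by
  set g : ℕ → ℝ := fun n ↦ a * b * (kummerTerm a b x n - kummerTerm (a + 1) b x n)
  have htelescope : HasSum (fun n ↦ g n - g (n + 1)) 0 := by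
    simpa [g, kummerTerm_zero] using (((summable_kummerTerm a b x).sub
      (summable_kummerTerm (a + 1) b x)).mul_left (a * b)).hasSum_sub_succ
  have hterm : (fun n ↦ g n - g (n + 1)) = fun n ↦ b * (a + x) * kummerTerm a b x n +
      x * (a - b) * kummerTerm a (b + 1) x n - a * b * kummerTerm (a + 1) b x n := by
    funext n
    simp only [g, kummerTerm_contiguous a x hb n]
    ring
  rw [hterm] at htelescope
  exact (((summable_kummerTerm a b x).hasSum.mul_left (b * (a + x))).add
    ((summable_kummerTerm a (b + 1) x).hasSum.mul_left (x * (a - b)))).sub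
    ((summable_kummerTerm (a + 1) b x).hasSum.mul_left (a * b)) |>.unique htelescope

theorem kummer_recurrence_13_4_5 (a b x : ℝ)
    (hb : ∀ n : ℕ, b ≠ -(n : ℝ)) (hb1 : ∀ n : ℕ, b + 1 ≠ -(n : ℝ)) :
    b * (a + x) * F11 a b x + x * (a - b) * F11 a (b + 1) x - a * b * F11 (a + 1) b x = 0 :=
  kummer_recurrence_13_4_5_general a b x hb
end

section
/- Let (L₁, L₂) have a Multinomial distribution with m trials and probabilities θ₁, θ₂ (θ₁, θ₂ > 0, θ₁+θ₂ < 1). Then for all natural numbers j₁, j₂: E[(L₁+1)_{j₁} (L₂+1)_{j₂}] = j₁!·j₂!· Σ_{l₂=0}^{m} C(j₂,l₂) C(m,l₂) θ₂^{l₂} Σ_{l₁=0}^{m−l₂} C(j₁,l₁) C(m−l₂,l₁) θ₁^{l₁}. -/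
/-!
Since `(l + 1)_j = j! * C(j + l, l)`, summing out one coordinate of the multinomial vector is an
instance of Ljunggren's identity
`∑ₗ C(α + l, l) C(n, l) xˡ yⁿ⁻ˡ = ∑ₖ C(α, k) C(n, k) xᵏ (x + y)ⁿ⁻ᵏ`,
which follows from Vandermonde's identity `C(α + l, l) = ∑ₖ C(α, k) C(l, k)` and the binomial
theorem. Writing the multinomial coefficient as `C(m, l₁) C(m - l₁, l₂)`, we first sum out `l₂`
(this replaces `1 - θ₁ - θ₂` by `1 - θ₁`), swap the triangular double sum using
`C(m, a) C(m - a, b) = C(m, b) C(m - b, a)`, and then sum out `l₁`, where now `x + y = 1`.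
-/

open Polynomial Finset

open scoped Nat

theorem asc_natCast_add_one (l j : ℕ) : asc ((l : ℝ) + 1) j = j ! * (j + l).choose l := by
  rw [asc, ← Nat.cast_add_one, ascPochhammer_nat_eq_natCast_ascFactorial,
    Nat.ascFactorial_eq_factorial_mul_choose, add_comm l j, ← Nat.choose_symm_add, Nat.cast_mul]

theorem choose_add_eq_sum_range_choose_mul_choose (α : ℕ) {l n : ℕ} (hl : l ≤ n) :
    (α + l).choose l = ∑ k ∈ range (n + 1), α.choose k * l.choose k := by
  rw [Nat.add_choose_eq, Nat.sum_antidiagonal_eq_sum_range_succ_mk]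
  refine sum_subset_zero_on_sdiff (range_subset_range.mpr (by omega)) (fun k hk => ?_)
    (fun k hk => ?_)
  · simp only [mem_sdiff, mem_range] at hk
    rw [Nat.choose_eq_zero_of_lt (n := l) (by omega), mul_zero]
  · rw [Nat.choose_symm (mem_range_succ_iff.mp hk)]

theorem sum_range_choose_mul_choose_mul_pow {R : Type*} [CommSemiring R] {k n : ℕ} (hk : k ≤ n)
    (x y : R) :
    ∑ l ∈ range (n + 1), (l.choose k : R) * n.choose l * x ^ l * y ^ (n - l) =
      n.choose k * x ^ k * (x + y) ^ (n - k) := by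
  obtain ⟨d, rfl⟩ := Nat.exists_eq_add_of_le hk
  rw [add_assoc, sum_range_add, sum_eq_zero fun l hl => by
      rw [Nat.choose_eq_zero_of_lt (mem_range.mp hl), Nat.cast_zero, zero_mul, zero_mul, zero_mul],
    zero_add, Nat.add_sub_cancel_left, add_pow, mul_sum]
  refine sum_congr rfl fun i _ => ?_
  have hchoose : (k + d).choose (k + i) * (k + i).choose k = (k + d).choose k * d.choose i := by
    simpa using Nat.choose_mul (n := k + d) (Nat.le_add_right k i)
  rw [Nat.add_sub_add_left, pow_add, mul_comm ((k + i).choose k : R), ← Nat.cast_mul, hchoose]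
  push_cast
  ring

/-- Ljunggren's identity. -/
theorem sum_range_choose_add_mul_choose_mul_pow {R : Type*} [CommSemiring R] (α n : ℕ)
    (x y : R) :
    ∑ l ∈ range (n + 1), ((α + l).choose l : R) * n.choose l * x ^ l * y ^ (n - l) =
      ∑ k ∈ range (n + 1), (α.choose k : R) * n.choose k * x ^ k * (x + y) ^ (n - k) := by
  calc
    _ = ∑ l ∈ range (n + 1), ∑ k ∈ range (n + 1),
          (α.choose k : R) * ((l.choose k : R) * n.choose l * x ^ l * y ^ (n - l)) := by
      refine sum_congr rfl fun l hl => ?_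
      rw [choose_add_eq_sum_range_choose_mul_choose α (mem_range_succ_iff.mp hl)]
      push_cast
      rw [sum_mul, sum_mul, sum_mul]
      exact sum_congr rfl fun k _ => by ring
    _ = _ := by
      rw [sum_comm]
      refine sum_congr rfl fun k hk => ?_
      rw [← mul_sum, sum_range_choose_mul_choose_mul_pow (mem_range_succ_iff.mp hk)]
      ring

theorem sum_range_asc_mul_choose_mul_pow (j n : ℕ) (x y : ℝ) :
    ∑ l ∈ range (n + 1), asc ((l : ℝ) + 1) j * n.choose l * x ^ l * y ^ (n - l) =
      j ! * ∑ k ∈ range (n + 1), (j.choose k : ℝ) * n.choose k * x ^ k * (x + y) ^ (n - k) := by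
  rw [← sum_range_choose_add_mul_choose_mul_pow, mul_sum]
  simp only [asc_natCast_add_one, mul_assoc]

theorem choose_mul_choose_sub_comm (m a b : ℕ) :
    m.choose a * (m - a).choose b = m.choose b * (m - b).choose a := by
  have ha := Nat.choose_mul (n := m) (Nat.le_add_right a b)
  have hb := Nat.choose_mul (n := m) (Nat.le_add_left b a)
  rw [Nat.add_sub_cancel_left] at ha
  rw [Nat.add_sub_cancel] at hb
  rw [← ha, ← hb, Nat.choose_symm_add]

theorem sum_range_choose_mul_choose_comm {M : Type*} [AddCommMonoid M] (m : ℕ)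
    (f : ℕ → ℕ → ℕ → M) :
    ∑ a ∈ range (m + 1), ∑ b ∈ range (m - a + 1),
        (m.choose a * (m - a).choose b) • f a b (m - a - b) =
      ∑ b ∈ range (m + 1), ∑ a ∈ range (m - b + 1),
        (m.choose b * (m - b).choose a) • f a b (m - b - a) := by
  rw [sum_comm' (t' := range (m + 1)) (s' := fun b => range (m - b + 1))
    fun a b => by simp only [mem_range]; omega]
  refine sum_congr rfl fun b _ => sum_congr rfl fun a _ => ?_
  rw [choose_mul_choose_sub_comm, Nat.sub_right_comm]

theorem sum_range_mul_sum_range_asc_mul_choose_mul_pow (m j : ℕ) (u : ℕ → ℝ) (x y z : ℝ) :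
    ∑ a ∈ range (m + 1), u a * m.choose a * x ^ a *
        ∑ b ∈ range (m - a + 1), asc ((b : ℝ) + 1) j * (m - a).choose b * y ^ b *
          z ^ (m - a - b) =
      j ! * ∑ b ∈ range (m + 1), (j.choose b : ℝ) * m.choose b * y ^ b *
        ∑ a ∈ range (m - b + 1), u a * (m - b).choose a * x ^ a * (y + z) ^ (m - b - a) := by
  calc
    _ = ∑ a ∈ range (m + 1), ∑ b ∈ range (m - a + 1), (m.choose a * (m - a).choose b) •
          (j ! * j.choose b * y ^ b * (u a * x ^ a * (y + z) ^ (m - a - b))) := by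
      refine sum_congr rfl fun a _ => ?_
      rw [sum_range_asc_mul_choose_mul_pow, mul_sum, mul_sum]
      refine sum_congr rfl fun b _ => ?_
      rw [nsmul_eq_mul]
      push_cast
      ring
    _ = ∑ b ∈ range (m + 1), ∑ a ∈ range (m - b + 1), (m.choose b * (m - b).choose a) •
          (j ! * j.choose b * y ^ b * (u a * x ^ a * (y + z) ^ (m - b - a))) :=
      sum_range_choose_mul_choose_comm m fun a b r =>
        j ! * j.choose b * y ^ b * (u a * x ^ a * (y + z) ^ r)
    _ = _ := by
      rw [mul_sum]
      refine sum_congr rfl fun b _ => ?_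
      rw [mul_sum, mul_sum]
      refine sum_congr rfl fun a _ => ?_
      rw [nsmul_eq_mul]
      push_cast
      ring

theorem cast_factorial_div_eq_choose_mul_choose {a b m : ℕ} (h : a + b ≤ m) :
    (m ! : ℝ) / (a ! * b ! * (m - a - b)!) = m.choose a * (m - a).choose b := by
  rw [div_eq_iff (by positivity)]
  have hm : m.choose a * a ! * (m - a)! = m ! :=
    Nat.choose_mul_factorial_mul_factorial ((Nat.le_add_right a b).trans h)
  have hma : (m - a).choose b * b ! * (m - a - b)! = (m - a)! :=
    Nat.choose_mul_factorial_mul_factorial (Nat.le_sub_of_add_le' h)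
  rw [← hm, ← hma]
  push_cast
  ring

theorem multinomial_factorial_moment_general (m : ℕ) (θ1 θ2 : ℝ) (j1 j2 : ℕ) :
    ∑ l1 ∈ range (m + 1), ∑ l2 ∈ range (m - l1 + 1),
        asc ((l1 : ℝ) + 1) j1 * asc ((l2 : ℝ) + 1) j2 *
          ((m.factorial : ℝ) /
              ((l1.factorial : ℝ) * (l2.factorial : ℝ) * ((m - l1 - l2).factorial : ℝ)) *
            θ1 ^ l1 * θ2 ^ l2 * (1 - θ1 - θ2) ^ (m - l1 - l2)) =
      (j1.factorial : ℝ) * (j2.factorial : ℝ) *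
        ∑ l2 ∈ range (m + 1), (j2.choose l2 : ℝ) * (m.choose l2 : ℝ) * θ2 ^ l2 *
          ∑ l1 ∈ range (m - l2 + 1),
            (j1.choose l1 : ℝ) * ((m - l2).choose l1 : ℝ) * θ1 ^ l1 := by
  calc
    _ = ∑ l1 ∈ range (m + 1), asc ((l1 : ℝ) + 1) j1 * m.choose l1 * θ1 ^ l1 *
          ∑ l2 ∈ range (m - l1 + 1), asc ((l2 : ℝ) + 1) j2 * (m - l1).choose l2 * θ2 ^ l2 *
            (1 - θ1 - θ2) ^ (m - l1 - l2) := by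
      refine sum_congr rfl fun l1 hl1 => ?_
      rw [mul_sum]
      refine sum_congr rfl fun l2 hl2 => ?_
      simp only [mem_range] at hl1 hl2
      rw [cast_factorial_div_eq_choose_mul_choose (by omega)]
      ring
    _ = _ := by
      rw [sum_range_mul_sum_range_asc_mul_choose_mul_pow, show θ2 + (1 - θ1 - θ2) = 1 - θ1 by ring,
        mul_comm (j1 ! : ℝ), mul_assoc]
      congr 1
      rw [mul_sum]
      refine sum_congr rfl fun l2 _ => ?_
      rw [sum_range_asc_mul_choose_mul_pow, add_sub_cancel]
      simp only [one_pow, mul_one]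
      ring

/-- Factorial moments `E[(L₁+1)_{j₁} (L₂+1)_{j₂}]` of a Multinomial `(m, θ₁, θ₂)` vector. -/
theorem multinomial_factorial_moment (m : ℕ) (θ1 θ2 : ℝ) (h1 : 0 < θ1) (h2 : 0 < θ2)
    (hsum : θ1 + θ2 < 1) (j1 j2 : ℕ) :
    ∑ l1 ∈ range (m + 1), ∑ l2 ∈ range (m - l1 + 1),
        asc ((l1 : ℝ) + 1) j1 * asc ((l2 : ℝ) + 1) j2 *
          ((m.factorial : ℝ) /
              ((l1.factorial : ℝ) * (l2.factorial : ℝ) * ((m - l1 - l2).factorial : ℝ)) *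
            θ1 ^ l1 * θ2 ^ l2 * (1 - θ1 - θ2) ^ (m - l1 - l2)) =
      (j1.factorial : ℝ) * (j2.factorial : ℝ) *
        ∑ l2 ∈ range (m + 1), (j2.choose l2 : ℝ) * (m.choose l2 : ℝ) * θ2 ^ l2 *
          ∑ l1 ∈ range (m - l2 + 1),
            (j1.choose l1 : ℝ) * ((m - l2).choose l1 : ℝ) * θ1 ^ l1 :=
  multinomial_factorial_moment_general m θ1 θ2 j1 j2
end

section
/- Let (X'₁, X'₂) ~ NcDir²(α₁,α₂,α₃,λ₁,λ₂,λ₃), i.e. the mixture where conditionally on independent Poisson variables M_i ~ Poisson(λ_i/2), the vector (X'₁,X'₂) is Dirichlet with parameters (α₁+M₁, α₂+M₂, α₃+M₃). Then for all r₁,r₂ ∈ ℕ: E[(X'₁)^{r₁}(X'₂)^{r₂}] = ((α₁)_{r₁}(α₂)_{r₂}/(α⁺)_{r⁺}) e^{−λ⁺/2} Σ_{j₁=0}^{r₁} Σ_{j₂=0}^{r₂} [C(r₁,j₁)C(r₂,j₂)(α⁺)_{j⁺}(λ₁/2)^{j₁}(λ₂/2)^{j₂} / ((α⁺+r⁺)_{j⁺}(α₁)_{j₁}(α₂)_{j₂})]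 · ₁F₁(α⁺+j⁺; α⁺+r⁺+j⁺; λ⁺/2), where r⁺=r₁+r₂, j⁺=j₁+j₂, α⁺=α₁+α₂+α₃, λ⁺=λ₁+λ₂+λ₃. -/
open Polynomial

/-!
Expand each rising factorial `(αᵢ + jᵢ)_{rᵢ}` in the falling factorials of `jᵢ` (Chu–Vandermonde)
and write `1 / (α⁺ + j⁺)_{r⁺} = (α⁺)_{j⁺} / ((α⁺)_{r⁺} (α⁺ + r⁺)_{j⁺})`. A Poisson weight absorbs
a falling factorial by an index shift, `j^{(k)} xʲ / j! = xᵏ · x^{j-k} / (j-k)!`. What remains of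
the sum over `(j₁, j₂, j₃)` depends on `j⁺` only, and the multinomial theorem collapses it to the
series `∑ₙ (x₁ + x₂ + x₃)ⁿ / n! · (α⁺ + k)ₙ / (α⁺ + r⁺ + k)ₙ = ₁F₁`.
-/

open Finset
open scoped Nat

lemma asc_add (a : ℝ) (n m : ℕ) : asc a (n + m) = asc a n * asc (a + n) m := by
  simpa [asc, eval_comp] using (congrArg (eval a) (ascPochhammer_mul ℝ n m)).symm

lemma asc_pos {a : ℝ} (ha : 0 < a) (n : ℕ) : 0 < asc a n := ascPochhammer_pos n a ha

lemma asc_le_asc {a b : ℝ} (ha : 0 < a) (hab : a ≤ b) (n : ℕ) : asc a n ≤ asc b n := by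
  induction n with
  | zero => simp [asc]
  | succ n ih =>
    simp only [asc, ascPochhammer_succ_right, eval_mul, eval_add, eval_X, eval_natCast] at ih ⊢
    have ha' := (asc_pos ha n).le
    have hb' := (asc_pos (ha.trans_le hab) n).le
    gcongr

lemma asc_eq_descPochhammer_smeval (a : ℝ) (n : ℕ) :
    asc a n = (descPochhammer ℤ n).smeval (a + n - 1) := by
  rw [descPochhammer_smeval_eq_ascPochhammer, ascPochhammer_smeval_eq_eval, asc]
  ring_nf

lemma asc_add_natCast_eq_sum_descFactorial (a : ℝ) (j r : ℕ) :
    asc (a + j) r =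
      ∑ k ∈ range (r + 1), (r.choose k : ℝ) * asc (a + k) (r - k) * j.descFactorial k := by
  rw [asc_eq_descPochhammer_smeval, show a + j + r - 1 = (a + r - 1) + j by ring,
    Ring.descPochhammer_smeval_add _ (Commute.all _ _), ← Nat.sum_antidiagonal_swap]
  simp only [Prod.fst_swap, Prod.snd_swap]
  rw [Nat.sum_antidiagonal_eq_sum_range_succ (fun k i => (r.choose i : ℝ) *
      ((descPochhammer ℤ i).smeval (a + r - 1) * (descPochhammer ℤ k).smeval (j : ℝ)))]
  refine sum_congr rfl fun k hk => ?_
  have hkr : k ≤ r := Nat.lt_succ_iff.mp (mem_range.mp hk)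
  rw [Nat.choose_symm hkr, descPochhammer_smeval_eq_descFactorial, asc_eq_descPochhammer_smeval,
    Nat.cast_sub hkr]
  ring_nf

lemma asc_mul_asc_add_comm (a : ℝ) (n r : ℕ) :
    asc a r * asc (a + r) n = asc a n * asc (a + n) r := by
  rw [← asc_add, ← asc_add, add_comm]

lemma asc_add_div_asc_add (a b : ℝ) (n k : ℕ) :
    asc a (n + k) / asc b (n + k) = asc a k / asc b k * (asc (a + k) n / asc (b + k) n) := by
  rw [add_comm n k, asc_add, asc_add, mul_div_mul_comm]

lemma abs_asc_div_asc_le_one {a b : ℝ} (ha : 0 < a) (hab : a ≤ b) (n : ℕ) :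
    |asc a n / asc b n| ≤ 1 := by
  have hb := asc_pos (ha.trans_le hab) n
  rw [abs_of_pos (div_pos (asc_pos ha n) hb), div_le_one hb]
  exact asc_le_asc ha hab n

lemma sum_antidiagonal_pow_div_factorial (x y : ℝ) (n : ℕ) :
    ∑ p ∈ antidiagonal n, x ^ p.1 / p.1 ! * (y ^ p.2 / p.2 !) = (x + y) ^ n / n ! := by
  rw [(Commute.all x y).add_pow', sum_div]
  refine sum_congr rfl fun p hp => ?_
  rw [HasAntidiagonal.mem_antidiagonal] at hp
  subst hp
  have hfact : ((p.1 + p.2).choose p.1 * p.1 ! * p.2 ! : ℝ) = (p.1 + p.2)! := by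
    exact_mod_cast Nat.choose_symm_add ▸ p.1.add_choose_mul_factorial_mul_factorial p.2
  have hchoose : ((p.1 + p.2).choose p.1 : ℝ) ≠ 0 :=
    Nat.cast_ne_zero.2 (Nat.choose_pos (Nat.le_add_right _ _)).ne'
  rw [nsmul_eq_mul, ← hfact]
  field_simp

lemma HasSum.sum_antidiagonal {α : Type*} [AddCommMonoid α] [TopologicalSpace α] [ContinuousAdd α]
    [RegularSpace α] {f : ℕ × ℕ → α} {a : α} (hf : HasSum f a) :
    HasSum (fun n => ∑ p ∈ antidiagonal n, f p) a := by
  simpa only [← sum_coe_sort (antidiagonal _), Function.comp_apply,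
    HasAntidiagonal.sigmaAntidiagonalEquivProd_apply] using
    (HasAntidiagonal.sigmaAntidiagonalEquivProd.hasSum_iff.2 hf).sigma fun n => hasSum_fintype _

lemma summable_pow_div_factorial_mul {h : ℕ → ℝ} {C : ℝ} (hC : ∀ n, |h n| ≤ C) (x : ℝ) :
    Summable fun n => x ^ n / n ! * h n := by
  refine Summable.of_norm_bounded ((Real.summable_pow_div_factorial |x|).mul_right C) fun n => ?_
  rw [Real.norm_eq_abs, abs_mul, abs_div, abs_pow, Nat.abs_cast]
  gcongr
  exact hC n

lemma hasSum_pow_div_factorial_mul_pow_div_factorial {h : ℕ → ℝ} {C : ℝ} (hC : ∀ n, |h n| ≤ C)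
    (x y : ℝ) :
    HasSum (fun p : ℕ × ℕ => x ^ p.1 / p.1 ! * (y ^ p.2 / p.2 ! * h (p.1 + p.2)))
      (∑' n, (x + y) ^ n / n ! * h n) := by
  have hsum : Summable fun p : ℕ × ℕ => x ^ p.1 / p.1 ! * (y ^ p.2 / p.2 ! * h (p.1 + p.2)) := by
    refine Summable.of_norm_bounded ((Real.summable_pow_div_factorial |x|).mul_of_nonneg
      ((Real.summable_pow_div_factorial |y|).mul_right C) (fun _ => by positivity)
      fun _ => mul_nonneg (by positivity) ((abs_nonneg _).trans (hC 0))) fun p => ?_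
    simp only [Real.norm_eq_abs, abs_mul, abs_div, abs_pow, Nat.abs_cast]
    gcongr
    exact hC _
  have hfib : ∀ n, ∑ p ∈ antidiagonal n, x ^ p.1 / p.1 ! * (y ^ p.2 / p.2 ! * h (p.1 + p.2))
      = (x + y) ^ n / n ! * h n := fun n => by
    rw [← sum_antidiagonal_pow_div_factorial, sum_mul]
    refine sum_congr rfl fun p hp => ?_
    rw [HasAntidiagonal.mem_antidiagonal.mp hp, mul_assoc]
  have hdiag := hsum.hasSum.sum_antidiagonal
  simp only [hfib] at hdiag
  rw [hdiag.tsum_eq]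
  exact hsum.hasSum

lemma hasSum_pow_div_factorial_mul_pow_div_factorial_mul_pow_div_factorial {h : ℕ → ℝ} {C : ℝ}
    (hC : ∀ n, |h n| ≤ C) (x y z : ℝ) :
    HasSum (fun j : ℕ × ℕ × ℕ =>
        x ^ j.1 / j.1 ! * (y ^ j.2.1 / j.2.1 ! * (z ^ j.2.2 / j.2.2 ! * h (j.1 + j.2.1 + j.2.2))))
      (∑' n, (x + y + z) ^ n / n ! * h n) := by
  set F : ℕ × ℕ × ℕ → ℝ := fun j =>
    x ^ j.1 / j.1 ! * (y ^ j.2.1 / j.2.1 ! * (z ^ j.2.2 / j.2.2 ! * h (j.1 + j.2.1 + j.2.2)))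
  have hF : Summable F := by
    have hC0 : 0 ≤ C := (abs_nonneg _).trans (hC 0)
    refine Summable.of_norm_bounded ((Real.summable_pow_div_factorial |x|).mul_of_nonneg
      ((Real.summable_pow_div_factorial |y|).mul_of_nonneg
        ((Real.summable_pow_div_factorial |z|).mul_right C) (fun _ => by positivity)
        fun _ => by positivity) (fun _ => by positivity)
      fun _ => mul_nonneg (by positivity) (by positivity)) fun j => ?_
    simp only [F, Real.norm_eq_abs, abs_mul, abs_div, abs_pow, Nat.abs_cast]
    gcongr
    exact hC _
  have hfiber : ∀ a, HasSum (fun w : ℕ × ℕ => F (a, w))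
      (x ^ a / a ! * ∑' m, (y + z) ^ m / m ! * h (a + m)) := fun a => by
    simpa only [F, add_assoc] using
      (hasSum_pow_div_factorial_mul_pow_div_factorial (fun n => hC (a + n)) y z).mul_left
        (x ^ a / a !)
  have houter := (hasSum_pow_div_factorial_mul_pow_div_factorial hC x (y + z)).prod_fiberwise
    fun a => ((summable_pow_div_factorial_mul (fun n => hC (a + n)) (y + z)).hasSum.mul_left
      (x ^ a / a !))
  rw [← add_assoc] at houter
  rw [← (hF.hasSum.prod_fiberwise hfiber).unique houter]
  exact hF.hasSum

lemma descFactorial_mul_pow_div_factorial (x : ℝ) (m k : ℕ) :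
    ((m + k).descFactorial k : ℝ) * (x ^ (m + k) / (m + k)!) = x ^ k * (x ^ m / m !) := by
  have hfact := Nat.factorial_mul_descFactorial (Nat.le_add_left k m)
  rw [Nat.add_sub_cancel] at hfact
  have hne : ((m + k).descFactorial k : ℝ) ≠ 0 :=
    Nat.cast_ne_zero.2 (Nat.descFactorial_pos.2 (Nat.le_add_left k m)).ne'
  rw [← hfact, pow_add, Nat.cast_mul]
  field_simp

lemma HasSum.descFactorial_mul_descFactorial_mul {β : Type*} {f : ℕ × ℕ × β → ℝ} {s x y : ℝ}
    {k₁ k₂ : ℕ}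
    (hs : HasSum (fun m : ℕ × ℕ × β =>
      x ^ m.1 / m.1 ! * (y ^ m.2.1 / m.2.1 ! * f (m.1 + k₁, m.2.1 + k₂, m.2.2))) s) :
    HasSum (fun j : ℕ × ℕ × β => (j.1.descFactorial k₁ * j.2.1.descFactorial k₂ : ℝ) *
      (x ^ j.1 / j.1 ! * (y ^ j.2.1 / j.2.1 ! * f j))) (x ^ k₁ * y ^ k₂ * s) := by
  set shift : ℕ × ℕ × β → ℕ × ℕ × β := fun m => (m.1 + k₁, m.2.1 + k₂, m.2.2)
  have hshift : Function.Injective shift := fun m m' h => by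
    simp only [shift, Prod.mk.injEq, Nat.add_right_cancel_iff] at h
    exact Prod.ext h.1 (Prod.ext h.2.1 h.2.2)
  refine (hshift.hasSum_iff fun j hj => ?_).1 ?_
  · have hlt : j.1 < k₁ ∨ j.2.1 < k₂ := by
      by_contra! hle
      exact hj ⟨(j.1 - k₁, j.2.1 - k₂, j.2.2), by simp [shift, Nat.sub_add_cancel, hle]⟩
    rcases hlt with h | h <;> simp [Nat.descFactorial_eq_zero_iff_lt.2 h]
  · refine (hs.mul_left (x ^ k₁ * y ^ k₂)).congr_fun fun m => ?_
    simp only [shift, Function.comp_apply]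
    linear_combination (y ^ (m.2.1 + k₂) / (m.2.1 + k₂)! * f (m.1 + k₁, m.2.1 + k₂, m.2.2)) *
      ((m.2.1 + k₂).descFactorial k₂ : ℝ) * descFactorial_mul_pow_div_factorial x m.1 k₁ +
      x ^ k₁ * (x ^ m.1 / m.1 !) * f (m.1 + k₁, m.2.1 + k₂, m.2.2) *
      descFactorial_mul_pow_div_factorial y m.2.1 k₂

lemma hasSum_descFactorial_mul_asc_div_asc {a b : ℝ} (ha : 0 < a) (hab : a ≤ b) (k₁ k₂ : ℕ)
    (x y z : ℝ) :
    HasSum (fun j : ℕ × ℕ × ℕ => (j.1.descFactorial k₁ * j.2.1.descFactorial k₂ : ℝ) *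
        (x ^ j.1 / j.1 ! * (y ^ j.2.1 / j.2.1 ! * (z ^ j.2.2 / j.2.2 ! *
          (asc a (j.1 + j.2.1 + j.2.2) / asc b (j.1 + j.2.1 + j.2.2))))))
      (x ^ k₁ * y ^ k₂ * (asc a (k₁ + k₂) / asc b (k₁ + k₂) *
        F11 (a + (k₁ + k₂ : ℕ)) (b + (k₁ + k₂ : ℕ)) (x + y + z))) := by
  refine HasSum.descFactorial_mul_descFactorial_mul (f := fun j : ℕ × ℕ × ℕ =>
    z ^ j.2.2 / j.2.2 ! * (asc a (j.1 + j.2.1 + j.2.2) / asc b (j.1 + j.2.1 + j.2.2))) ?_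
  have hsum := hasSum_pow_div_factorial_mul_pow_div_factorial_mul_pow_div_factorial
    (h := fun n => asc a (n + (k₁ + k₂)) / asc b (n + (k₁ + k₂)))
    (fun n => abs_asc_div_asc_le_one ha hab _) x y z
  have htsum : ∑' n : ℕ, (x + y + z) ^ n / n ! *
      (asc a (n + (k₁ + k₂)) / asc b (n + (k₁ + k₂))) =
      asc a (k₁ + k₂) / asc b (k₁ + k₂) *
        F11 (a + (k₁ + k₂ : ℕ)) (b + (k₁ + k₂ : ℕ)) (x + y + z) := by
    rw [F11, ← tsum_mul_left]
    exact tsum_congr fun n => by rw [asc_add_div_asc_add]; ring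
  rw [htsum] at hsum
  refine hsum.congr_fun fun m => ?_
  simp only [show m.1 + k₁ + (m.2.1 + k₂) + m.2.2 = m.1 + m.2.1 + m.2.2 + (k₁ + k₂) by ring]

lemma ncdir_term_eq_sum {α₁ α₂ α₃ : ℝ} (hα : 0 < α₁ + α₂ + α₃) (x₁ x₂ x₃ : ℝ) (r₁ r₂ : ℕ)
    (j : ℕ × ℕ × ℕ) :
    (Real.exp (-x₁) * x₁ ^ j.1 / j.1 !) * (Real.exp (-x₂) * x₂ ^ j.2.1 / j.2.1 !) *
        (Real.exp (-x₃) * x₃ ^ j.2.2 / j.2.2 !) *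
        (asc (α₁ + j.1) r₁ * asc (α₂ + j.2.1) r₂ /
          asc (α₁ + α₂ + α₃ + (j.1 + j.2.1 + j.2.2)) (r₁ + r₂)) =
      Real.exp (-(x₁ + x₂ + x₃)) / asc (α₁ + α₂ + α₃) (r₁ + r₂) *
        ∑ k₁ ∈ range (r₁ + 1), ∑ k₂ ∈ range (r₂ + 1),
          (r₁.choose k₁ * asc (α₁ + k₁) (r₁ - k₁) * (r₂.choose k₂ * asc (α₂ + k₂) (r₂ - k₂))) *
          ((j.1.descFactorial k₁ * j.2.1.descFactorial k₂ : ℝ) *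
            (x₁ ^ j.1 / j.1 ! * (x₂ ^ j.2.1 / j.2.1 ! * (x₃ ^ j.2.2 / j.2.2 ! *
              (asc (α₁ + α₂ + α₃) (j.1 + j.2.1 + j.2.2) /
                asc (α₁ + α₂ + α₃ + (r₁ + r₂ : ℕ)) (j.1 + j.2.1 + j.2.2)))))) := by
  set a := α₁ + α₂ + α₃
  set n := j.1 + j.2.1 + j.2.2
  have hinv : (asc (a + n) (r₁ + r₂))⁻¹ =
      asc a n / (asc a (r₁ + r₂) * asc (a + (r₁ + r₂ : ℕ)) n) := by
    rw [asc_mul_asc_add_comm, div_mul_cancel_left₀ (asc_pos hα n).ne']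
  have hexp : Real.exp (-(x₁ + x₂ + x₃)) = Real.exp (-x₁) * Real.exp (-x₂) * Real.exp (-x₃) := by
    rw [← Real.exp_add, ← Real.exp_add]; ring_nf
  have hn : α₁ + α₂ + α₃ + (j.1 + j.2.1 + j.2.2 : ℝ) = a + n := by push_cast [n]; ring
  rw [hn, asc_add_natCast_eq_sum_descFactorial α₁ j.1 r₁,
    asc_add_natCast_eq_sum_descFactorial α₂ j.2.1 r₂, sum_mul_sum, hexp,
    div_eq_mul_inv _ (asc (a + n) _), hinv]
  simp only [mul_sum, sum_mul]
  refine sum_congr rfl fun k₁ _ => sum_congr rfl fun k₂ _ => ?_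
  ring

lemma hasSum_ncdir_moment {α₁ α₂ α₃ : ℝ} (h₁ : 0 < α₁) (h₂ : 0 < α₂) (hα : 0 < α₁ + α₂ + α₃)
    (x₁ x₂ x₃ : ℝ) (r₁ r₂ : ℕ) :
    HasSum (fun j : ℕ × ℕ × ℕ =>
        (Real.exp (-x₁) * x₁ ^ j.1 / j.1 !) * (Real.exp (-x₂) * x₂ ^ j.2.1 / j.2.1 !) *
          (Real.exp (-x₃) * x₃ ^ j.2.2 / j.2.2 !) *
          (asc (α₁ + j.1) r₁ * asc (α₂ + j.2.1) r₂ /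
            asc (α₁ + α₂ + α₃ + (j.1 + j.2.1 + j.2.2)) (r₁ + r₂)))
      (asc α₁ r₁ * asc α₂ r₂ / asc (α₁ + α₂ + α₃) (r₁ + r₂) * Real.exp (-(x₁ + x₂ + x₃)) *
        ∑ k₁ ∈ range (r₁ + 1), ∑ k₂ ∈ range (r₂ + 1),
          (r₁.choose k₁ : ℝ) * (r₂.choose k₂ : ℝ) * asc (α₁ + α₂ + α₃) (k₁ + k₂) *
              x₁ ^ k₁ * x₂ ^ k₂ /
              (asc (α₁ + α₂ + α₃ + (r₁ + r₂)) (k₁ + k₂) * asc α₁ k₁ * asc α₂ k₂) *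
            F11 (α₁ + α₂ + α₃ + (k₁ + k₂)) (α₁ + α₂ + α₃ + (r₁ + r₂) + (k₁ + k₂))
              (x₁ + x₂ + x₃)) := by
  have hsum := (hasSum_sum (s := range (r₁ + 1)) fun k₁ _ =>
    hasSum_sum (s := range (r₂ + 1)) fun k₂ _ =>
    (hasSum_descFactorial_mul_asc_div_asc hα (le_add_of_nonneg_right (Nat.cast_nonneg (r₁ + r₂)))
      k₁ k₂ x₁ x₂ x₃).mul_left
      (r₁.choose k₁ * asc (α₁ + k₁) (r₁ - k₁) * (r₂.choose k₂ * asc (α₂ + k₂) (r₂ - k₂)))).mul_left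
    (Real.exp (-(x₁ + x₂ + x₃)) / asc (α₁ + α₂ + α₃) (r₁ + r₂))
  refine (congrArg (HasSum _) ?_).mp (hsum.congr_fun (ncdir_term_eq_sum hα x₁ x₂ x₃ r₁ r₂))
  push_cast
  simp only [mul_sum]
  refine sum_congr rfl fun k₁ hk₁ => sum_congr rfl fun k₂ hk₂ => ?_
  have hr₁ : asc α₁ r₁ = asc α₁ k₁ * asc (α₁ + k₁) (r₁ - k₁) := by
    rw [← asc_add, Nat.add_sub_cancel' (Nat.lt_succ_iff.mp (mem_range.mp hk₁))]
  have hr₂ : asc α₂ r₂ = asc α₂ k₂ * asc (α₂ + k₂) (r₂ - k₂) := by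
    rw [← asc_add, Nat.add_sub_cancel' (Nat.lt_succ_iff.mp (mem_range.mp hk₂))]
  have := asc_pos h₁ k₁
  have := asc_pos h₂ k₂
  have := asc_pos hα (r₁ + r₂)
  have := asc_pos (a := α₁ + α₂ + α₃ + (r₁ + r₂)) (by positivity) (k₁ + k₂)
  rw [hr₁, hr₂]
  field_simp

open Finset in
theorem ncdir_mixed_moment_general (α1 α2 α3 lam1 lam2 lam3 : ℝ)
    (h1 : 0 < α1) (h2 : 0 < α2) (h3 : 0 < α3)
    (r1 r2 : ℕ) :
    (∑' j : ℕ × ℕ × ℕ,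
        (Real.exp (-(lam1 / 2)) * (lam1 / 2) ^ j.1 / (j.1.factorial : ℝ)) *
          (Real.exp (-(lam2 / 2)) * (lam2 / 2) ^ j.2.1 / (j.2.1.factorial : ℝ)) *
          (Real.exp (-(lam3 / 2)) * (lam3 / 2) ^ j.2.2 / (j.2.2.factorial : ℝ)) *
          (asc (α1 + j.1) r1 * asc (α2 + j.2.1) r2 /
            asc (α1 + α2 + α3 + (j.1 + j.2.1 + j.2.2)) (r1 + r2))) =
      asc α1 r1 * asc α2 r2 / asc (α1 + α2 + α3) (r1 + r2) *
        Real.exp (-((lam1 + lam2 + lam3) / 2)) *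
        ∑ j1 ∈ range (r1 + 1), ∑ j2 ∈ range (r2 + 1),
          (r1.choose j1 : ℝ) * (r2.choose j2 : ℝ) * asc (α1 + α2 + α3) (j1 + j2) *
              (lam1 / 2) ^ j1 * (lam2 / 2) ^ j2 /
              (asc (α1 + α2 + α3 + (r1 + r2)) (j1 + j2) * asc α1 j1 * asc α2 j2) *
            F11 (α1 + α2 + α3 + (j1 + j2)) (α1 + α2 + α3 + (r1 + r2) + (j1 + j2))
              ((lam1 + lam2 + lam3) / 2) := by
  rw [show (lam1 + lam2 + lam3) / 2 = lam1 / 2 + lam2 / 2 + lam3 / 2 by ring]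
  exact (hasSum_ncdir_moment h1 h2 (by positivity) (lam1 / 2) (lam2 / 2) (lam3 / 2) r1 r2).tsum_eq

open Finset in
/-- Mixed raw moments of the bivariate Non-central Dirichlet distribution
`NcDir²(α₁,α₂,α₃,λ₁,λ₂,λ₃)`, defined through its Poisson mixture representation. -/
theorem ncdir_mixed_moment (α1 α2 α3 lam1 lam2 lam3 : ℝ)
    (h1 : 0 < α1) (h2 : 0 < α2) (h3 : 0 < α3)
    (hl1 : 0 ≤ lam1) (hl2 : 0 ≤ lam2) (hl3 : 0 ≤ lam3)
    (hlplus : 0 < lam1 + lam2 + lam3) (r1 r2 : ℕ) :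
    (∑' j : ℕ × ℕ × ℕ,
        (Real.exp (-(lam1 / 2)) * (lam1 / 2) ^ j.1 / (j.1.factorial : ℝ)) *
          (Real.exp (-(lam2 / 2)) * (lam2 / 2) ^ j.2.1 / (j.2.1.factorial : ℝ)) *
          (Real.exp (-(lam3 / 2)) * (lam3 / 2) ^ j.2.2 / (j.2.2.factorial : ℝ)) *
          (asc (α1 + j.1) r1 * asc (α2 + j.2.1) r2 /
            asc (α1 + α2 + α3 + (j.1 + j.2.1 + j.2.2)) (r1 + r2))) =
      asc α1 r1 * asc α2 r2 / asc (α1 + α2 + α3) (r1 + r2) *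
        Real.exp (-((lam1 + lam2 + lam3) / 2)) *
        ∑ j1 ∈ range (r1 + 1), ∑ j2 ∈ range (r2 + 1),
          (r1.choose j1 : ℝ) * (r2.choose j2 : ℝ) * asc (α1 + α2 + α3) (j1 + j2) *
              (lam1 / 2) ^ j1 * (lam2 / 2) ^ j2 /
              (asc (α1 + α2 + α3 + (r1 + r2)) (j1 + j2) * asc α1 j1 * asc α2 j2) *
            F11 (α1 + α2 + α3 + (j1 + j2)) (α1 + α2 + α3 + (r1 + r2) + (j1 + j2))
              ((lam1 + lam2 + lam3) / 2) :=
  ncdir_mixed_moment_general α1 α2 α3 lam1 lam2 lam3 h1 h2 h3 r1 r2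
end
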